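/- arXiv:quant-ph/0606093 — 5 statements merged into one kernel-verified Lean document; each statement's English description precedes it below -/
import Mathlib

section
/- Operator Cauchy–Schwarz inequality for completely positive maps in Stinespring form: for all X, Y ∈ B(K), the operator inequality (X,Y)(Y,X) ≤ ‖(Y,Y)‖ · (X,X) holds in B(H) (i.e. ‖(Y,Y)‖·(X,X) − (X,Y)(Y,X) is a positive operator). -/
open ContinuousLinearMap

variable {H K : Type*} [NormedAddCommGroup H] [InnerProductSpace ℂ H] [CompleteSpace H]
  [NormedAddCommGroup K] [InnerProductSpace ℂ K] [CompleteSpace K]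

/-- The completely positive map `Φ(X) = V† X V` in Stinespring form. -/
noncomputable def stinespring (V : H →L[ℂ] K) (X : K →L[ℂ] K) : H →L[ℂ] H :=
  adjoint V ∘L X ∘L V

/-- The operator-valued sesquilinear form `(X, Y) := Φ(X†Y) − Φ(X)†Φ(Y)`. -/
noncomputable def sesq (V : H →L[ℂ] K) (X Y : K →L[ℂ] K) : H →L[ℂ] H :=
  stinespring V (adjoint X ∘L Y) - adjoint (stinespring V X) ∘L stinespring V Y

/-!
Writing `D = 1 - V V†` for the defect operator of `V`, the form factors as
`(X, Y) = (X V)† D (Y V)`, and `D ≥ 0` because `V` is a contraction. With `R = √D` this is the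
Gram form `(X, Y) = S† T` of `S = R X V` and `T = R Y V`, and the inequality becomes
`S† (T T†) S ≤ ‖T† T‖ S† S`: conjugate `T T† ≤ ‖T‖² • 1` by `S`, and use `‖T‖² = ‖T† T‖`.
-/

open scoped InnerProduct

lemma sesq_eq_adjoint_comp_defect_comp (V : H →L[ℂ] K) (A B : K →L[ℂ] K) :
    sesq V A B = (A ∘L V)† ∘L (1 - V ∘L V†) ∘L (B ∘L V) := by
  ext x
  simp [sesq, stinespring, adjoint_comp]

lemma comp_adjoint_le_algebraMap_norm_sq (T : H →L[ℂ] K) :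
    T ∘L T† ≤ algebraMap ℝ _ (‖T‖ ^ 2) := by
  have hnorm : ‖T ∘L T†‖ = ‖T‖ ^ 2 := by
    simpa only [adjoint_adjoint, adjoint.norm_map, sq] using norm_adjoint_comp_self (T†)
  exact hnorm ▸ (isPositive_self_comp_adjoint T).isSelfAdjoint.le_algebraMap_norm_self

lemma one_sub_comp_adjoint_nonneg {V : H →L[ℂ] K} (hV : ‖V‖ ≤ 1) : 0 ≤ 1 - V ∘L V† := by
  rw [sub_nonneg]
  calc V ∘L V† ≤ algebraMap ℝ _ (‖V‖ ^ 2) := comp_adjoint_le_algebraMap_norm_sq V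
    _ ≤ algebraMap ℝ _ 1 := algebraMap_mono _ (pow_le_one₀ (norm_nonneg V) hV)
    _ = 1 := map_one _

lemma adjoint_comp_comp_adjoint_comp_le (S T : H →L[ℂ] K) :
    (S† ∘L T) ∘L (T† ∘L S) ≤ (‖T† ∘L T‖ : ℂ) • (S† ∘L S) := by
  have hconj := ((le_def _ _).mp (comp_adjoint_le_algebraMap_norm_sq T)).adjoint_conj S
  rw [le_def, norm_adjoint_comp_self, ← sq]
  convert hconj using 1
  simp [comp_sub, sub_comp, Algebra.algebraMap_eq_smul_one, comp_assoc, one_def, ← Complex.coe_smul]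

lemma adjoint_comp_conj_comp_adjoint_comp_le {P : K →L[ℂ] K} (hP : 0 ≤ P) (S T : H →L[ℂ] K) :
    (S† ∘L P ∘L T) ∘L (T† ∘L P ∘L S) ≤ (‖T† ∘L P ∘L T‖ : ℂ) • (S† ∘L P ∘L S) := by
  obtain ⟨R, hR, hRR⟩ : ∃ R : K →L[ℂ] K, IsSelfAdjoint R ∧ R * R = P :=
    ⟨CFC.sqrt P, (CFC.sqrt_nonneg P).isSelfAdjoint, CFC.sqrt_mul_sqrt_self P hP⟩
  have hgram : ∀ U W : H →L[ℂ] K, U† ∘L P ∘L W = (R ∘L U)† ∘L (R ∘L W) := by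
    intro U W
    rw [adjoint_comp, hR.adjoint_eq, ← hRR]
    rfl
  simpa only [hgram] using adjoint_comp_comp_adjoint_comp_le (R ∘L S) (R ∘L T)

/-- Operator Cauchy–Schwarz inequality: `(X,Y)(Y,X) ≤ ‖(Y,Y)‖ ⬝ (X,X)`, i.e. the
difference `‖(Y,Y)‖ • (X,X) − (X,Y)(Y,X)` is a positive operator on `H`. -/
theorem operator_cauchy_schwarz (V : H →L[ℂ] K) (hV : ‖V‖ ≤ 1) (X Y : K →L[ℂ] K) :
    ((‖sesq V Y Y‖ : ℂ) • sesq V X X - sesq V X Y ∘L sesq V Y X).IsPositive := by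
  simp only [sesq_eq_adjoint_comp_defect_comp]
  exact adjoint_comp_conj_comp_adjoint_comp_le (one_sub_comp_adjoint_nonneg hV) (X ∘L V) (Y ∘L V)
end

section
/- The maximal added variance equals the norm of the form: for every density matrix ρ one has Var(B, Φ*(ρ)) − Var(Φ(B), ρ) = tr(ρ (Φ(B²) − Φ(B)²)), and the supremum of Var(B, Φ*(ρ)) − Var(Φ(B), ρ) over all density matrices ρ equals ‖Φ(B²) − Φ(B)²‖ = ‖(B,B)‖. -/
/-!
Writing `Φ(X) = V†XV`, cyclicity of the trace turns the added variance into
`tr(ρ A)` with `A = Φ(B²) − Φ(B)² = (BV)†(1 − VV†)(BV)`, which is positive semidefinite because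
`1 − VV†` is a projection. For a Hermitian `A` one has `A ≤ ‖A‖·1`, so `tr(ρ A) ≤ ‖A‖` on density
matrices; for `A ≥ 0` the norm `‖A‖` is the largest eigenvalue, and the pure state on a
corresponding eigenvector attains it.
-/

open scoped Matrix ComplexOrder

/-- The variance of an observable `X` in the state `ρ`: `Var(X,ρ) = tr(ρX²) − (tr(ρX))²`
(real-valued, via real parts). -/
noncomputable def mVar {k : ℕ} (X ρ : Matrix (Fin k) (Fin k) ℂ) : ℝ :=
  (ρ * X * X).trace.re - ((ρ * X).trace.re) ^ 2

namespace Matrix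

open scoped MatrixOrder Norms.L2Operator

section Isometry

variable {m n 𝕜 : Type*} [Fintype m] [Fintype n] [DecidableEq m] [DecidableEq n] [RCLike 𝕜]

lemma posSemidef_one_sub_mul_conjTranspose {V : Matrix m n 𝕜} (hV : Vᴴ * V = 1) :
    (1 - V * Vᴴ).PosSemidef := by
  have hidem : V * Vᴴ * (V * Vᴴ) = V * Vᴴ := by
    rw [Matrix.mul_assoc, ← Matrix.mul_assoc Vᴴ, hV, Matrix.one_mul]
  have hP : (1 - V * Vᴴ)ᴴ * (1 - V * Vᴴ) = 1 - V * Vᴴ := by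
    simp only [conjTranspose_sub, conjTranspose_one, conjTranspose_mul,
      conjTranspose_conjTranspose, sub_mul, mul_sub, one_mul, mul_one, hidem]
    abel
  exact hP ▸ posSemidef_conjTranspose_mul_self _

lemma posSemidef_conj_conjTranspose_mul_self_sub {V : Matrix m n 𝕜} (hV : Vᴴ * V = 1)
    (B : Matrix m m 𝕜) :
    (Vᴴ * (Bᴴ * B) * V - (Vᴴ * B * V)ᴴ * (Vᴴ * B * V)).PosSemidef := by
  have h : (B * V)ᴴ * (1 - V * Vᴴ) * (B * V) =
      Vᴴ * (Bᴴ * B) * V - (Vᴴ * B * V)ᴴ * (Vᴴ * B * V) := by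
    simp only [conjTranspose_mul, conjTranspose_conjTranspose, Matrix.mul_sub, Matrix.sub_mul,
      Matrix.mul_one, Matrix.mul_assoc]
  exact h ▸ (posSemidef_one_sub_mul_conjTranspose hV).conjTranspose_mul_mul_same _

end Isometry

variable {ι : Type*} [Fintype ι] [DecidableEq ι]

lemma PosSemidef.trace_mul_nonneg {𝕜 : Type*} [RCLike 𝕜] {ρ X : Matrix ι ι 𝕜}
    (hρ : ρ.PosSemidef) (hX : X.PosSemidef) : 0 ≤ (ρ * X).trace := by
  obtain ⟨R, rfl⟩ := CStarAlgebra.nonneg_iff_eq_star_mul_self.mp hρ.nonneg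
  rw [star_eq_conjTranspose, mul_assoc, trace_mul_comm]
  exact (hX.mul_mul_conjTranspose_same R).trace_nonneg

lemma IsHermitian.re_trace_mul_le_norm {ρ A : Matrix ι ι ℂ} (hA : A.IsHermitian)
    (hρ : ρ.PosSemidef) (hρ₁ : ρ.trace = 1) : (ρ * A).trace.re ≤ ‖A‖ := by
  have hle : (algebraMap ℝ _ ‖A‖ - A).PosSemidef :=
    (hA.isSelfAdjoint.le_algebraMap_norm_self : A ≤ algebraMap ℝ _ ‖A‖)
  have h := hρ.trace_mul_nonneg hle
  rw [mul_sub, trace_sub, Algebra.algebraMap_eq_smul_one, mul_smul_comm, mul_one, trace_smul,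
    hρ₁] at h
  simpa using (Complex.le_def.mp h).1

lemma PosSemidef.exists_re_trace_mul_eq_norm [Nonempty ι] {A : Matrix ι ι ℂ}
    (hA : A.PosSemidef) :
    ∃ ρ : Matrix ι ι ℂ, ρ.PosSemidef ∧ ρ.trace = 1 ∧ (ρ * A).trace.re = ‖A‖ := by
  obtain ⟨i, hi⟩ : ‖A‖ ∈ Set.range hA.isHermitian.eigenvalues := by
    rw [← hA.isHermitian.spectrum_real_eq_range_eigenvalues]
    exact CStarAlgebra.norm_mem_spectrum_of_nonneg hA.nonneg
  set v := hA.isHermitian.eigenvectorBasis i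
  refine ⟨vecMulVec v (star v), posSemidef_vecMulVec_self_star v, ?_, ?_⟩
  · rw [trace_vecMulVec, ← EuclideanSpace.inner_eq_star_dotProduct, inner_self_eq_norm_sq_to_K,
      hA.isHermitian.eigenvectorBasis.orthonormal.1 i]
    simp
  · rw [vecMulVec_mul, trace_vecMulVec, dotProduct_comm, ← dotProduct_mulVec, ← hi,
      hA.isHermitian.eigenvalues_eq]
    rfl

lemma PosSemidef.isGreatest_re_trace_mul [Nonempty ι] {A : Matrix ι ι ℂ} (hA : A.PosSemidef) :
    IsGreatest {v : ℝ | ∃ ρ : Matrix ι ι ℂ, ρ.PosSemidef ∧ ρ.trace = 1 ∧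
      v = (ρ * A).trace.re} ‖A‖ := by
  obtain ⟨ρ, hρ, hρ₁, hρA⟩ := hA.exists_re_trace_mul_eq_norm
  refine ⟨⟨ρ, hρ, hρ₁, hρA.symm⟩, ?_⟩
  rintro _ ⟨ρ, hρ, hρ₁, rfl⟩
  exact hA.isHermitian.re_trace_mul_le_norm hρ hρ₁

end Matrix

open Matrix

lemma mVar_conj_sub_mVar {m n : ℕ} (V : Matrix (Fin m) (Fin n) ℂ)
    (B : Matrix (Fin m) (Fin m) ℂ) (ρ : Matrix (Fin n) (Fin n) ℂ) :
    mVar B (V * ρ * Vᴴ) - mVar (Vᴴ * B * V) ρ =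
      (ρ * (Vᴴ * (B * B) * V - (Vᴴ * B * V) * (Vᴴ * B * V))).trace.re := by
  have cycle : ∀ X, (V * ρ * Vᴴ * X).trace = (ρ * (Vᴴ * X * V)).trace := fun X => by
    rw [Matrix.mul_assoc, Matrix.mul_assoc, trace_mul_comm, Matrix.mul_assoc]
  have cycle_sq := cycle (B * B)
  rw [← Matrix.mul_assoc] at cycle_sq
  simp only [mVar, Matrix.mul_sub, trace_sub, Complex.sub_re, cycle_sq, cycle B,
    ← Matrix.mul_assoc]
  ring

theorem maximal_added_variance_general (n m : ℕ) (hn : 0 < n)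
    (V : Matrix (Fin m) (Fin n) ℂ) (hV : Vᴴ * V = 1)
    (B : Matrix (Fin m) (Fin m) ℂ) (hB : B.IsHermitian) :
    (∀ ρ : Matrix (Fin n) (Fin n) ℂ, ρ.PosSemidef → ρ.trace = 1 →
        mVar B (V * ρ * Vᴴ) - mVar (Vᴴ * B * V) ρ =
          ((ρ * (Vᴴ * (B * B) * V - (Vᴴ * B * V) * (Vᴴ * B * V))).trace).re) ∧
    IsGreatest
      {v : ℝ | ∃ ρ : Matrix (Fin n) (Fin n) ℂ, ρ.PosSemidef ∧ ρ.trace = 1 ∧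
        v = mVar B (V * ρ * Vᴴ) - mVar (Vᴴ * B * V) ρ}
      ‖Matrix.toEuclideanCLM (𝕜 := ℂ) (Vᴴ * (B * B) * V - (Vᴴ * B * V) * (Vᴴ * B * V))‖ ∧
    ‖Matrix.toEuclideanCLM (𝕜 := ℂ) (Vᴴ * (B * B) * V - (Vᴴ * B * V) * (Vᴴ * B * V))‖ =
      ‖Matrix.toEuclideanCLM (𝕜 := ℂ) (Vᴴ * (Bᴴ * B) * V - (Vᴴ * B * V)ᴴ * (Vᴴ * B * V))‖ := by
  have hform : Vᴴ * (Bᴴ * B) * V - (Vᴴ * B * V)ᴴ * (Vᴴ * B * V) =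
      Vᴴ * (B * B) * V - (Vᴴ * B * V) * (Vᴴ * B * V) := by
    simp only [conjTranspose_mul, conjTranspose_conjTranspose, hB.eq, Matrix.mul_assoc]
  have hpsd := hform ▸ posSemidef_conj_conjTranspose_mul_self_sub hV B
  have : Nonempty (Fin n) := ⟨⟨0, hn⟩⟩
  refine ⟨fun ρ _ _ => mVar_conj_sub_mVar V B ρ, ?_, by rw [hform]⟩
  simp only [mVar_conj_sub_mVar]
  -- the scoped L2 operator norm of a matrix `A` is by definition `‖toEuclideanCLM A‖`
  exact hpsd.isGreatest_re_trace_mul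

/-- The maximal added variance equals the norm of the form: for every density matrix
`ρ`, `Var(B, Φ*(ρ)) − Var(Φ(B), ρ) = tr(ρ (Φ(B²) − Φ(B)²))`, and the supremum of this
added variance over all density matrices is attained and equals
`‖Φ(B²) − Φ(B)²‖ = ‖(B,B)‖` (operator norm). Here `Φ(X) = V† X V` and `Φ*(ρ) = V ρ V†`
for an isometry `V : ℂⁿ → ℂᵐ`. -/
theorem maximal_added_variance (n m : ℕ) (hn : 0 < n) (hnm : n ≤ m)
    (V : Matrix (Fin m) (Fin n) ℂ) (hV : Vᴴ * V = 1)
    (B : Matrix (Fin m) (Fin m) ℂ) (hB : B.IsHermitian) :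
    (∀ ρ : Matrix (Fin n) (Fin n) ℂ, ρ.PosSemidef → ρ.trace = 1 →
        mVar B (V * ρ * Vᴴ) - mVar (Vᴴ * B * V) ρ =
          ((ρ * (Vᴴ * (B * B) * V - (Vᴴ * B * V) * (Vᴴ * B * V))).trace).re) ∧
    IsGreatest
      {v : ℝ | ∃ ρ : Matrix (Fin n) (Fin n) ℂ, ρ.PosSemidef ∧ ρ.trace = 1 ∧
        v = mVar B (V * ρ * Vᴴ) - mVar (Vᴴ * B * V) ρ}
      ‖Matrix.toEuclideanCLM (𝕜 := ℂ) (Vᴴ * (B * B) * V - (Vᴴ * B * V) * (Vᴴ * B * V))‖ ∧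
    ‖Matrix.toEuclideanCLM (𝕜 := ℂ) (Vᴴ * (B * B) * V - (Vᴴ * B * V) * (Vᴴ * B * V))‖ =
      ‖Matrix.toEuclideanCLM (𝕜 := ℂ) (Vᴴ * (Bᴴ * B) * V - (Vᴴ * B * V)ᴴ * (Vᴴ * B * V))‖ :=
  maximal_added_variance_general n m hn V hV B hB
end

section
/- Near-idempotency near a projection: let P be an orthogonal projection and X a self-adjoint operator on a complex Hilbert space with 0 ≤ X ≤ 1, ‖X − P‖ ≤ Δ, and Δ ≤ 1/2. Then ‖X − X²‖ ≤ Δ(1 − Δ). -/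
/-!
By the continuous functional calculus, `‖x - x ^ 2‖` is the largest value of `s - s ^ 2` on the
spectrum of `x`, which lies in `[0, 1]`. The resolvent of the projection `p` at `t ∈ (0, 1)` has
norm `max (1 / t) (1 / (1 - t))`, so a Neumann series keeps every `t ∈ (Δ, 1 - Δ)` out of the
spectrum of `x`; on the rest of `[0, 1]`, `s - s ^ 2 ≤ Δ * (1 - Δ)`.
-/

open ContinuousLinearMap

section CStarAlgebra

variable {A : Type*} [CStarAlgebra A]

theorem IsSelfAdjoint.notMem_spectrum_of_norm_sub_lt {a b : A} (ha : IsSelfAdjoint a) {t r : ℝ}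
    (hdist : ∀ s ∈ spectrum ℝ a, r ≤ |t - s|) (hab : ‖b - a‖ < r) : t ∉ spectrum ℝ b := by
  nontriviality A
  have hr : 0 < r := (norm_nonneg _).trans_lt hab
  have hne : ∀ s ∈ spectrum ℝ a, t - s ≠ 0 := fun s hs => abs_pos.mp (hr.trans_le (hdist s hs))
  set u := cfcUnits (fun s => t - s) a hne
  have hu : (u : A) = algebraMap ℝ A t - a := by
    change cfc (fun s => t - s) a = _
    rw [cfc_sub .., cfc_const t a, cfc_id' ℝ a]
  have hu_inv : ‖(↑u⁻¹ : A)‖ ≤ r⁻¹ := by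
    change ‖cfc (fun s => (t - s)⁻¹) a‖ ≤ r⁻¹
    refine norm_cfc_le (inv_nonneg.mpr hr.le) fun s hs => ?_
    rw [norm_inv, Real.norm_eq_abs]
    exact inv_anti₀ hr (hdist s hs)
  have hnear : ‖(algebraMap ℝ A t - b) - u‖ < ‖(↑u⁻¹ : A)‖⁻¹ := by
    rw [hu, sub_sub_sub_cancel_left, ← norm_neg, neg_sub]
    exact hab.trans_le ((le_inv_comm₀ hr (Units.norm_pos _)).mpr hu_inv)
  exact spectrum.notMem_iff.mpr (u.ofNearby _ hnear).isUnit

theorem IsSelfAdjoint.notMem_spectrum_of_isIdempotentElem {p b : A} (hp : IsIdempotentElem p)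
    (hp_sa : IsSelfAdjoint p) {t : ℝ} (hbp : ‖b - p‖ < min t (1 - t)) : t ∉ spectrum ℝ b := by
  refine hp_sa.notMem_spectrum_of_norm_sub_lt (fun s hs => ?_) hbp
  rcases hp.spectrum_subset ℝ hs with rfl | rfl
  · exact (min_le_left _ _).trans (by rw [sub_zero]; exact le_abs_self t)
  · exact (min_le_right _ _).trans (by rw [abs_sub_comm]; exact le_abs_self _)

variable [PartialOrder A] [StarOrderedRing A]

theorem spectrum_subset_Icc_of_nonneg_of_le_one {x : A} (h0 : 0 ≤ x) (h1 : x ≤ 1) :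
    spectrum ℝ x ⊆ Set.Icc 0 1 := fun s hs =>
  ⟨spectrum_nonneg_of_nonneg h0 hs, (CFC.le_one_iff x).mp h1 s hs⟩

end CStarAlgebra

theorem abs_sub_sq_le_of_notMem_Ioo {s Δ : ℝ} (hs : s ∈ Set.Icc 0 1) (hΔ : Δ ≤ 1 / 2)
    (hgap : s ∉ Set.Ioo Δ (1 - Δ)) : |s - s ^ 2| ≤ Δ * (1 - Δ) := by
  obtain ⟨hs0, hs1⟩ := hs
  rw [abs_of_nonneg (by nlinarith)]
  rcases le_or_gt s Δ with hsΔ | hΔs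
  · nlinarith
  · have : 1 - Δ ≤ s := not_lt.mp fun h => hgap ⟨hΔs, h⟩
    nlinarith

theorem CStarAlgebra.norm_sub_sq_le_of_norm_sub_projection_le {A : Type*} [CStarAlgebra A]
    [PartialOrder A] [StarOrderedRing A] {p x : A} (hp : IsIdempotentElem p)
    (hp_sa : IsSelfAdjoint p) (hx0 : 0 ≤ x) (hx1 : x ≤ 1) {Δ : ℝ} (hxp : ‖x - p‖ ≤ Δ)
    (hΔ : Δ ≤ 1 / 2) : ‖x - x ^ 2‖ ≤ Δ * (1 - Δ) := by
  have hΔ0 : 0 ≤ Δ := (norm_nonneg _).trans hxp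
  have hcfc : x - x ^ 2 = cfc (fun s : ℝ => s - s ^ 2) x := by
    rw [cfc_sub .., cfc_pow .., cfc_id' ℝ x]
  rw [hcfc]
  refine norm_cfc_le (by nlinarith) fun s hs => ?_
  refine abs_sub_sq_le_of_notMem_Ioo (spectrum_subset_Icc_of_nonneg_of_le_one hx0 hx1 hs) hΔ ?_
  rintro ⟨hΔs, hs1Δ⟩
  exact hp_sa.notMem_spectrum_of_isIdempotentElem hp (hxp.trans_lt (lt_min hΔs (by linarith))) hs

/-- Near-idempotency near a projection: if `P` is an orthogonal projection, `X` is
self-adjoint with `0 ≤ X ≤ 1`, `‖X − P‖ ≤ Δ` and `Δ ≤ 1/2`, then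
`‖X − X²‖ ≤ Δ(1 − Δ)`. -/
theorem norm_sub_sq_le_near_projection
    {H : Type*} [NormedAddCommGroup H] [InnerProductSpace ℂ H] [CompleteSpace H]
    (P X : H →L[ℂ] H) (hPproj : IsIdempotentElem P) (hPsa : IsSelfAdjoint P)
    (hX0 : X.IsPositive) (hX1 : (1 - X).IsPositive)
    (Δ : ℝ) (hXP : ‖X - P‖ ≤ Δ) (hΔ : Δ ≤ 1 / 2) :
    ‖X - X ^ 2‖ ≤ Δ * (1 - Δ) :=
  CStarAlgebra.norm_sub_sq_le_of_norm_sub_projection_le hPproj hPsa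
    ((nonneg_iff_isPositive X).mpr hX0) (sub_nonneg.mp ((nonneg_iff_isPositive _).mpr hX1)) hXP hΔ
end

section
/- Off-diagonal lemma: let X be a self-adjoint operator on a complex Hilbert space with 0 ≤ X ≤ 1, and let ψ and φ be orthonormal vectors. Then ⟨ψ, X ψ⟩ − ⟨ψ, X² ψ⟩ ≤ 1/4 − |⟨ψ, X φ⟩|². -/
/-!
Bessel's inequality for the orthonormal pair `ψ, φ` applied to
`X ψ` gives `|⟪ψ, X ψ⟫|² + |⟪φ, X ψ⟫|² ≤ ‖X ψ‖² = ⟪ψ, X² ψ⟫`, symmetry turns `|⟪φ, X ψ⟫|`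
into `|⟪ψ, X φ⟫|`, and `a - a² ≤ 1/4` for `a = re ⟪ψ, X ψ⟫` finishes the proof.
-/

open scoped InnerProductSpace

section

variable {𝕜 E : Type*} [RCLike 𝕜] [NormedAddCommGroup E] [InnerProductSpace 𝕜 E]

theorem norm_inner_sq_add_norm_inner_sq_le {u w : E} (hu : ‖u‖ = 1) (hw : ‖w‖ = 1)
    (huw : ⟪u, w⟫_𝕜 = 0) (v : E) :
    ‖⟪u, v⟫_𝕜‖ ^ 2 + ‖⟪w, v⟫_𝕜‖ ^ 2 ≤ ‖v‖ ^ 2 := by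
  have horth : Orthonormal 𝕜 ![u, w] := by
    rw [orthonormal_iff_ite]
    intro i j
    fin_cases i <;> fin_cases j <;>
      simp [huw, ← inner_conj_symm w u, inner_self_eq_norm_sq_to_K, hu, hw]
  simpa [Fin.sum_univ_two] using horth.sum_inner_products_le v (s := Finset.univ)

namespace LinearMap.IsSymmetric

theorem re_inner_sq_apply_self_clm {T : E →L[𝕜] E} (hT : (T : E →ₗ[𝕜] E).IsSymmetric) (x : E) :
    RCLike.re ⟪x, (T ^ 2) x⟫_𝕜 = ‖T x‖ ^ 2 := by
  rw [pow_two, mul_apply_eq_comp, ← hT.apply_clm, inner_self_eq_norm_sq]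

theorem norm_inner_apply_comm {T : E →ₗ[𝕜] E} (hT : T.IsSymmetric) (x y : E) :
    ‖⟪x, T y⟫_𝕜‖ = ‖⟪y, T x⟫_𝕜‖ := by
  rw [← hT x y, ← inner_conj_symm, RCLike.norm_conj]

end LinearMap.IsSymmetric

end

theorem offdiagonal_lemma_general
    {H : Type*} [NormedAddCommGroup H] [InnerProductSpace ℂ H]
    (X : H →L[ℂ] H) (hX0 : X.IsPositive)
    (ψ φ : H) (hψ : ‖ψ‖ = 1) (hφ : ‖φ‖ = 1) (hperp : ⟪ψ, φ⟫_ℂ = 0) :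
    (⟪ψ, X ψ⟫_ℂ).re - (⟪ψ, (X ^ 2) ψ⟫_ℂ).re ≤ 1 / 4 - ‖⟪ψ, X φ⟫_ℂ‖ ^ 2 := by
  have hX := hX0.isSymmetric
  have hbessel := norm_inner_sq_add_norm_inner_sq_le hψ hφ hperp (X ψ)
  have hre : (⟪ψ, X ψ⟫_ℂ).re ^ 2 ≤ ‖⟪ψ, X ψ⟫_ℂ‖ ^ 2 :=
    sq_le_sq.mpr ((Complex.abs_re_le_norm _).trans (le_abs_self _))
  have hX2 : (⟪ψ, (X ^ 2) ψ⟫_ℂ).re = ‖X ψ‖ ^ 2 := hX.re_inner_sq_apply_self_clm ψ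
  have hcomm : ‖⟪ψ, X φ⟫_ℂ‖ = ‖⟪φ, X ψ⟫_ℂ‖ := hX.norm_inner_apply_comm ψ φ
  rw [hX2, hcomm]
  nlinarith [sq_nonneg ((⟪ψ, X ψ⟫_ℂ).re - 1 / 2)]

/-- Off-diagonal lemma: if `0 ≤ X ≤ 1` and `ψ, φ` are orthonormal, then
`⟨ψ, X ψ⟩ − ⟨ψ, X² ψ⟩ ≤ 1/4 − |⟨ψ, X φ⟩|²`. -/
theorem offdiagonal_lemma
    {H : Type*} [NormedAddCommGroup H] [InnerProductSpace ℂ H] [CompleteSpace H]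
    (X : H →L[ℂ] H) (hX0 : X.IsPositive) (hX1 : (1 - X).IsPositive)
    (ψ φ : H) (hψ : ‖ψ‖ = 1) (hφ : ‖φ‖ = 1) (hperp : ⟪ψ, φ⟫_ℂ = 0) :
    (⟪ψ, X ψ⟫_ℂ).re - (⟪ψ, (X ^ 2) ψ⟫_ℂ).re ≤ 1 / 4 - ‖⟪ψ, X φ⟫_ℂ‖ ^ 2 :=
  offdiagonal_lemma_general X hX0 ψ φ hψ hφ hperp
end

section
/- Disturbance of the sharpness-example channel: let p ∈ [0, 1/2], let V₊ = diag(√(1−p), √p) and V₋ = diag(√p, √(1−p)), and define R(ρ) := V₊ ρ V₊ + V₋ ρ V₋ on 2×2 complex matrices. Then for every density matrix ρ (positive semidefinite with trace 1) and every orthogonal projection matrix P, |tr(R(ρ) P) − tr(ρ P)| ≤ 1/2 − √(p(1−p)); moreover there exist a density matrix ρ and an orthogonal projection P for which equality holds. -/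
/-!
The channel fixes the diagonal of `ρ` and multiplies its off-diagonal entries by
`c = 2√(p(1-p)) ≤ 1`, so `tr(R(ρ)P) - tr(ρP) = (c - 1)(ρ₀₁P₁₀ + ρ₁₀P₀₁)`. The off-diagonal
entries of a density matrix (`|ρ₀₁|² ≤ ρ₀₀ρ₁₁ ≤ 1/4`) and of a projection
(`|P₀₁|² = P₀₀(1 - P₀₀) ≤ 1/4`) have modulus at most `1/2`, which gives the bound; equality
holds for `ρ = P = |+⟩⟨+|`, the matrix with all entries `1/2`.
-/

open scoped Matrix ComplexOrder

/-- `V₊ = diag(√(1−p), √p)`. -/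
noncomputable def Vplus (p : ℝ) : Matrix (Fin 2) (Fin 2) ℂ :=
  Matrix.diagonal ![(Real.sqrt (1 - p) : ℂ), (Real.sqrt p : ℂ)]

/-- `V₋ = diag(√p, √(1−p))`. -/
noncomputable def Vminus (p : ℝ) : Matrix (Fin 2) (Fin 2) ℂ :=
  Matrix.diagonal ![(Real.sqrt p : ℂ), (Real.sqrt (1 - p) : ℂ)]

/-- The sharpness-example channel `R(ρ) = V₊ ρ V₊ + V₋ ρ V₋`. -/
noncomputable def Rchan (p : ℝ) (ρ : Matrix (Fin 2) (Fin 2) ℂ) : Matrix (Fin 2) (Fin 2) ℂ :=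
  Vplus p * ρ * Vplus p + Vminus p * ρ * Vminus p

namespace Matrix

variable {n : Type*}

lemma IsHermitian.apply_mul_apply_swap {A : Matrix n n ℂ} (hA : A.IsHermitian) (i j : n) :
    A i j * A j i = (‖A i j‖ ^ 2 : ℝ) := by
  rw [← hA.apply j i, Complex.star_def, Complex.mul_conj, Complex.normSq_eq_norm_sq]

lemma IsHermitian.posSemidef_of_isIdempotentElem [Fintype n] {𝕜 : Type*} [RCLike 𝕜]
    {P : Matrix n n 𝕜} (hP : P.IsHermitian) (hP2 : IsIdempotentElem P) : P.PosSemidef := by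
  simpa only [hP.eq, hP2.eq] using posSemidef_conjTranspose_mul_self P

lemma PosSemidef.norm_apply_zero_one_sq_le {A : Matrix (Fin 2) (Fin 2) ℂ} (hA : A.PosSemidef) :
    ‖A 0 1‖ ^ 2 ≤ (A 0 0).re * (A 1 1).re := by
  have hdet := hA.det_nonneg
  rw [det_fin_two, hA.isHermitian.apply_mul_apply_swap 0 1,
    ← Complex.conj_eq_iff_re.mp (hA.isHermitian.apply 0 0),
    ← Complex.conj_eq_iff_re.mp (hA.isHermitian.apply 1 1)] at hdet
  exact sub_nonneg.mp (by exact_mod_cast hdet)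

lemma PosSemidef.norm_apply_zero_one_le_half {ρ : Matrix (Fin 2) (Fin 2) ℂ} (hρ : ρ.PosSemidef)
    (htr : ρ.trace = 1) : ‖ρ 0 1‖ ≤ 1 / 2 := by
  have hsum : (ρ 0 0).re + (ρ 1 1).re = 1 := by
    simpa [trace_fin_two] using congrArg Complex.re htr
  nlinarith [hρ.norm_apply_zero_one_sq_le, sq_nonneg ((ρ 0 0).re - (ρ 1 1).re),
    norm_nonneg (ρ 0 1)]

lemma IsHermitian.norm_apply_zero_one_le_half_of_isIdempotentElem {P : Matrix (Fin 2) (Fin 2) ℂ}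
    (hP : P.IsHermitian) (hP2 : IsIdempotentElem P) : ‖P 0 1‖ ≤ 1 / 2 := by
  have h00 : P 0 0 * P 0 0 + P 0 1 * P 1 0 = P 0 0 := by
    simpa [mul_apply, Fin.sum_univ_two] using congrFun (congrFun hP2.eq 0) 0
  rw [hP.apply_mul_apply_swap 0 1, ← Complex.conj_eq_iff_re.mp (hP.apply 0 0)] at h00
  have h00' : (P 0 0).re * (P 0 0).re + ‖P 0 1‖ ^ 2 = (P 0 0).re := by exact_mod_cast h00
  nlinarith [sq_nonneg ((P 0 0).re - 1 / 2), norm_nonneg (P 0 1)]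

lemma IsHermitian.norm_apply_zero_one_mul_add_le {A B : Matrix (Fin 2) (Fin 2) ℂ}
    (hA : A.IsHermitian) (hB : B.IsHermitian) :
    ‖A 0 1 * B 1 0 + A 1 0 * B 0 1‖ ≤ 2 * ‖A 0 1‖ * ‖B 0 1‖ := by
  calc ‖A 0 1 * B 1 0 + A 1 0 * B 0 1‖ ≤ ‖A 0 1‖ * ‖B 1 0‖ + ‖A 1 0‖ * ‖B 0 1‖ :=
        (norm_add_le _ _).trans (by rw [norm_mul, norm_mul])
    _ = 2 * ‖A 0 1‖ * ‖B 0 1‖ := by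
      rw [← hA.apply 0 1, ← hB.apply 0 1, norm_star, norm_star]; ring

end Matrix

lemma two_mul_sqrt_mul_one_sub_le_one (p : ℝ) : 2 * √(p * (1 - p)) ≤ 1 := by
  have : √(p * (1 - p)) ≤ 1 / 2 :=
    Real.sqrt_le_iff.mpr ⟨by norm_num, by nlinarith [sq_nonneg (p - 1 / 2)]⟩
  linarith

lemma Rchan_eq {p : ℝ} (hp0 : 0 ≤ p) (hp1 : p ≤ 1) (ρ : Matrix (Fin 2) (Fin 2) ℂ) :
    Rchan p ρ = !![ρ 0 0, 2 * √(p * (1 - p)) * ρ 0 1; 2 * √(p * (1 - p)) * ρ 1 0, ρ 1 1] := by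
  have hq : (√(1 - p) : ℂ) * √(1 - p) = 1 - p := by
    exact_mod_cast Real.mul_self_sqrt (sub_nonneg.mpr hp1)
  have hp : (√p : ℂ) * √p = p := by exact_mod_cast Real.mul_self_sqrt hp0
  rw [Real.sqrt_mul hp0]
  ext i j
  fin_cases i <;> fin_cases j <;> simp [Rchan, Vplus, Vminus]
  · linear_combination ρ 0 0 * (hq + hp)
  · ring
  · ring
  · linear_combination ρ 1 1 * (hq + hp)

lemma trace_Rchan_mul_sub_trace_mul {p : ℝ} (hp0 : 0 ≤ p) (hp1 : p ≤ 1)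
    (ρ P : Matrix (Fin 2) (Fin 2) ℂ) :
    (Rchan p ρ * P).trace - (ρ * P).trace =
      (2 * √(p * (1 - p)) - 1 : ℝ) * (ρ 0 1 * P 1 0 + ρ 1 0 * P 0 1) := by
  simp only [Rchan_eq hp0 hp1, Matrix.trace_fin_two, Matrix.mul_apply, Fin.sum_univ_two,
    Matrix.of_apply, Matrix.cons_val', Matrix.cons_val_zero, Matrix.cons_val_one]
  push_cast
  ring

noncomputable def projPlus : Matrix (Fin 2) (Fin 2) ℂ := Matrix.of fun _ _ => 1 / 2

lemma isHermitian_projPlus : projPlus.IsHermitian := by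
  ext i j; simp [projPlus]

lemma isIdempotentElem_projPlus : IsIdempotentElem projPlus := by
  ext i j; simp [projPlus, Matrix.mul_apply]

lemma trace_projPlus : projPlus.trace = 1 := by
  simp [projPlus, Matrix.trace_fin_two]; norm_num

/-- Disturbance of the sharpness-example channel: for every density matrix `ρ` and
every orthogonal projection `P`, `|tr(R(ρ)P) − tr(ρP)| ≤ 1/2 − √(p(1−p))`, and this
bound is attained by some density matrix and projection. -/
theorem sharpness_channel_disturbance (p : ℝ) (hp0 : 0 ≤ p) (hp : p ≤ 1 / 2) :
    (∀ ρ P : Matrix (Fin 2) (Fin 2) ℂ, ρ.PosSemidef → ρ.trace = 1 →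
        P * P = P → Pᴴ = P →
        ‖(Rchan p ρ * P).trace - (ρ * P).trace‖ ≤ 1 / 2 - Real.sqrt (p * (1 - p))) ∧
    ∃ ρ P : Matrix (Fin 2) (Fin 2) ℂ, ρ.PosSemidef ∧ ρ.trace = 1 ∧
      P * P = P ∧ Pᴴ = P ∧
      ‖(Rchan p ρ * P).trace - (ρ * P).trace‖ = 1 / 2 - Real.sqrt (p * (1 - p)) := by
  have hc := two_mul_sqrt_mul_one_sub_le_one p
  have hdist (ρ P : Matrix (Fin 2) (Fin 2) ℂ) : ‖(Rchan p ρ * P).trace - (ρ * P).trace‖ =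
      (1 - 2 * √(p * (1 - p))) * ‖ρ 0 1 * P 1 0 + ρ 1 0 * P 0 1‖ := by
    rw [trace_Rchan_mul_sub_trace_mul hp0 (by linarith), norm_mul, Complex.norm_real,
      Real.norm_of_nonpos (by linarith), neg_sub]
  refine ⟨fun ρ P hρ htr hP2 hP => ?_, projPlus, projPlus,
    isHermitian_projPlus.posSemidef_of_isIdempotentElem isIdempotentElem_projPlus, trace_projPlus,
    isIdempotentElem_projPlus, isHermitian_projPlus, ?_⟩
  · have hcross : ‖ρ 0 1 * P 1 0 + ρ 1 0 * P 0 1‖ ≤ 1 / 2 := by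
      have hρ01 := hρ.norm_apply_zero_one_le_half htr
      have hP01 := Matrix.IsHermitian.norm_apply_zero_one_le_half_of_isIdempotentElem hP hP2
      calc _ ≤ 2 * ‖ρ 0 1‖ * ‖P 0 1‖ := hρ.isHermitian.norm_apply_zero_one_mul_add_le hP
        _ ≤ 2 * (1 / 2) * (1 / 2) := by gcongr
        _ = 1 / 2 := by norm_num
    calc _ = (1 - 2 * √(p * (1 - p))) * ‖ρ 0 1 * P 1 0 + ρ 1 0 * P 0 1‖ := hdist ρ P
      _ ≤ (1 - 2 * √(p * (1 - p))) * (1 / 2) := by gcongr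
      _ = _ := by ring
  · rw [hdist]
    norm_num [projPlus]
    ring
end
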